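/- In the martingale setting with weight v, weight vector ω⃗, and exponents 1 < p_i < ∞ with ∑ 1/p_i = 1/p, under the standing assumptions: if the weak-type inequality ‖𝔐(f⃗)‖_{L^{p,∞}(v)} ≤ C ∏_{i=1}^∞ ‖f_i‖_{L^{p_i}(ω_i)} holds for all admissible f⃗, then for every stopping time τ, (∫_{{τ<∞}} ∏_{i=1}^∞ E_τ(f_i)^p v dμ)^{1/p} ≤ C' ∏_{i=1}^∞ ‖f_i‖_{L^{p_i}(ω_i)}. -/

import Mathlib

open MeasureTheory Filter
open scoped ENNReal NNReal

noncomputable section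

/-- Limit of partial products in ℝ≥0∞ (via limsup; equals the limit when it exists). -/
def prodLim (a : ℕ → ℝ≥0∞) : ℝ≥0∞ :=
  Filter.limsup (fun k => ∏ i ∈ Finset.range k, a i) Filter.atTop

/-- Convergence of an infinite product in ℝ≥0∞. -/
def HasProdLim (a : ℕ → ℝ≥0∞) (L : ℝ≥0∞) : Prop :=
  Filter.Tendsto (fun k => ∏ i ∈ Finset.range k, a i) Filter.atTop (nhds L)

variable {Ω : Type*}

/-- Weighted L^q norm ‖f‖_{L^q(w)} = (∫ f^q w dμ)^{1/q}. -/
def wNorm {m : MeasurableSpace Ω} (μ : Measure Ω) (f : Ω → ℝ) (q : ℝ) (w : Ω → ℝ) : ℝ≥0∞ :=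
  (∫⁻ x, ENNReal.ofReal (f x) ^ q * ENNReal.ofReal (w x) ∂μ) ^ (1 / q)

/-- Conjugate exponent q' = q/(q-1). -/
def conjExp (q : ℝ) : ℝ := q / (q - 1)

/-- σ = w^{1-q'} = w^{-1/(q-1)}. -/
def sigmaW (w : Ω → ℝ) (q : ℝ) : Ω → ℝ := fun x => w x ^ (-(1 / (q - 1)))

/-- Generalized Doob maximal operator 𝔐(f⃗) = sup_n ∏ᵢ E(f i | ℱ n). -/
def doobM {m0 : MeasurableSpace Ω} (μ : Measure Ω) (ℱ : Filtration ℕ m0)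
    (f : ℕ → Ω → ℝ) (x : Ω) : ℝ≥0∞ :=
  ⨆ n, prodLim fun i => ENNReal.ofReal ((μ[f i|ℱ n]) x)

/-- ℕ∞-valued stopping time with respect to the filtration ℱ. -/
def IsStopT {m0 : MeasurableSpace Ω} (ℱ : Filtration ℕ m0) (τ : Ω → ℕ∞) : Prop :=
  ∀ n : ℕ, MeasurableSet[ℱ n] {x | τ x ≤ (n : ℕ∞)}

/-- E_τ(f), relevant on {τ < ∞} (junk value, via `toNat`, elsewhere). -/
def stopCE {m0 : MeasurableSpace Ω} (μ : Measure Ω) (ℱ : Filtration ℕ m0) (f : Ω → ℝ)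
    (τ : Ω → ℕ∞) (x : Ω) : ℝ := (μ[f|ℱ (τ x).toNat]) x

/-- Weighted weak-L^q norm ‖g‖_{L^{q,∞}(v)} = sup_λ λ |{g > λ}|_v^{1/q}. -/
def wkNorm {m : MeasurableSpace Ω} (μ : Measure Ω) (g : Ω → ℝ≥0∞) (q : ℝ) (v : Ω → ℝ) : ℝ≥0∞ :=
  ⨆ lam : ℝ≥0, (lam : ℝ≥0∞) *
    (∫⁻ x in {x | (lam : ℝ≥0∞) < g x}, ENNReal.ofReal (v x) ∂μ) ^ (1 / q)

/-- Admissibility of f⃗: each f i nonnegative measurable with f i ∈ L^{p i}(ω i), and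
∏ᵢ ‖f i‖_{L^{p i}(ω i)} convergent with finite value Lf. -/
def Adm {m : MeasurableSpace Ω} (μ : Measure Ω) (p : ℕ → ℝ) (ω : ℕ → Ω → ℝ)
    (f : ℕ → Ω → ℝ) (Lf : ℝ≥0∞) : Prop :=
  (∀ i, Measurable (f i)) ∧ (∀ i x, 0 ≤ f i x) ∧ (∀ i, wNorm μ (f i) (p i) (ω i) ≠ ⊤) ∧
    Lf ≠ ⊤ ∧ HasProdLim (fun i => wNorm μ (f i) (p i) (ω i)) Lf

/-- The testing inequality: for all stopping times τ and admissible f⃗,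
(∫_{τ<∞} ∏ᵢ E_τ(f i)^{p₀} v dμ)^{1/p₀} ≤ C ∏ᵢ ‖f i‖_{L^{p i}(ω i)}. -/
def TestIneq {m0 : MeasurableSpace Ω} (μ : Measure Ω) (ℱ : Filtration ℕ m0)
    (p : ℕ → ℝ) (p₀ : ℝ) (v : Ω → ℝ) (ω : ℕ → Ω → ℝ) (C : ℝ≥0∞) : Prop :=
  ∀ τ : Ω → ℕ∞, IsStopT ℱ τ → ∀ f Lf, Adm μ p ω f Lf →
    (∫⁻ x in {x | τ x ≠ ⊤},
        (prodLim fun i => ENNReal.ofReal (stopCE μ ℱ (f i) τ x)) ^ p₀ *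
          ENNReal.ofReal (v x) ∂μ) ^ (1 / p₀) ≤ C * Lf

/-- The weak-type inequality ‖𝔐(f⃗)‖_{L^{p₀,∞}(v)} ≤ C ∏ᵢ ‖f i‖_{L^{p i}(ω i)}. -/
def WeakIneq {m0 : MeasurableSpace Ω} (μ : Measure Ω) (ℱ : Filtration ℕ m0)
    (p : ℕ → ℝ) (p₀ : ℝ) (v : Ω → ℝ) (ω : ℕ → Ω → ℝ) (C : ℝ≥0∞) : Prop :=
  ∀ f Lf, Adm μ p ω f Lf → wkNorm μ (doobM μ ℱ f) p₀ v ≤ C * Lf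

/-- The strong-type inequality ‖𝔐(f⃗)‖_{L^{p₀}(v)} ≤ C ∏ᵢ ‖f i‖_{L^{p i}(ω i)}. -/
def StrongIneq {m0 : MeasurableSpace Ω} (μ : Measure Ω) (ℱ : Filtration ℕ m0)
    (p : ℕ → ℝ) (p₀ : ℝ) (v : Ω → ℝ) (ω : ℕ → Ω → ℝ) (C : ℝ≥0∞) : Prop :=
  ∀ f Lf, Adm μ p ω f Lf →
    (∫⁻ x, doobM μ ℱ f x ^ p₀ * ENNReal.ofReal (v x) ∂μ) ^ (1 / p₀) ≤ C * Lf

/-- The A_{p⃗} condition: E_n(v)^{1/p₀} ∏ᵢ E_n(ω i^{1-p i'})^{1/p i'} ≤ C for all n. -/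
def ApCond {m0 : MeasurableSpace Ω} (μ : Measure Ω) (ℱ : Filtration ℕ m0)
    (p : ℕ → ℝ) (p₀ : ℝ) (v : Ω → ℝ) (ω : ℕ → Ω → ℝ) (C : ℝ≥0∞) : Prop :=
  ∀ n : ℕ, ∀ᵐ x ∂μ,
    ENNReal.ofReal ((μ[v|ℱ n]) x) ^ (1 / p₀) *
      prodLim (fun i =>
        ENNReal.ofReal ((μ[sigmaW (ω i) (p i)|ℱ n]) x) ^ (1 / conjExp (p i))) ≤ C

/-- The reverse Hölder condition RH_{p⃗}:
∏ᵢ (∫_{τ<∞} σ i dμ)^{p₀/p i} ≤ C ∫_{τ<∞} ∏ᵢ (σ i)^{p₀/p i} dμ for all stopping times τ. -/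
def RHCond {m0 : MeasurableSpace Ω} (μ : Measure Ω) (ℱ : Filtration ℕ m0)
    (p : ℕ → ℝ) (p₀ : ℝ) (ω : ℕ → Ω → ℝ) (C : ℝ≥0∞) : Prop :=
  ∀ τ : Ω → ℕ∞, IsStopT ℱ τ →
    prodLim (fun i =>
        (∫⁻ x in {x | τ x ≠ ⊤}, ENNReal.ofReal (sigmaW (ω i) (p i) x) ∂μ) ^ (p₀ / p i))
      ≤ C * ∫⁻ x in {x | τ x ≠ ⊤},
          prodLim (fun i => ENNReal.ofReal (sigmaW (ω i) (p i) x) ^ (p₀ / p i)) ∂μ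

/-- The testing condition S_{p⃗}:
(∫_{τ<∞} 𝔐(σ⃗ χ_{τ<∞})^{p₀} v dμ)^{1/p₀} ≤ C ∏ᵢ |{τ<∞}|_{σ i}^{1/p i}. -/
def SpCond {m0 : MeasurableSpace Ω} (μ : Measure Ω) (ℱ : Filtration ℕ m0)
    (p : ℕ → ℝ) (p₀ : ℝ) (v : Ω → ℝ) (ω : ℕ → Ω → ℝ) (C : ℝ≥0∞) : Prop :=
  ∀ τ : Ω → ℕ∞, IsStopT ℱ τ →
    (∫⁻ x in {x | τ x ≠ ⊤},
        doobM μ ℱ (fun i => Set.indicator {y | τ y ≠ ⊤} (sigmaW (ω i) (p i))) x ^ p₀ *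
          ENNReal.ofReal (v x) ∂μ) ^ (1 / p₀)
      ≤ C * prodLim (fun i =>
          (∫⁻ x in {x | τ x ≠ ⊤}, ENNReal.ofReal (sigmaW (ω i) (p i) x) ∂μ) ^ (1 / p i))

/-- The standing assumptions of Section 3 of the paper. -/
structure Standing {m0 : MeasurableSpace Ω} (μ : Measure Ω) (ℱ : Filtration ℕ m0)
    (p : ℕ → ℝ) (p₀ : ℝ) (v : Ω → ℝ) (ω : ℕ → Ω → ℝ) : Prop where
  hgen : (⨆ n, (ℱ n : MeasurableSpace Ω)) = m0
  hp : ∀ i, 1 < p i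
  hp₀ : 0 < p₀
  hps : HasSum (fun i => 1 / p i) (1 / p₀)
  hv : Measurable v
  hvpos : ∀ x, 0 < v x
  hvint : Integrable v μ
  hω : ∀ i, Measurable (ω i)
  hωpos : ∀ i x, 0 < ω i x
  hωint : ∀ i, Integrable (ω i) μ
  hσint : ∀ i, Integrable (sigmaW (ω i) (p i)) μ
  hσnorm : ∃ Lσ : ℝ≥0∞, Lσ ≠ ⊤ ∧
    HasProdLim (fun i => wNorm μ (sigmaW (ω i) (p i)) (p i) (ω i)) Lσ
  hEσ : ∀ n : ℕ, ∀ᵐ x ∂μ,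
    prodLim (fun i =>
      ENNReal.ofReal ((μ[sigmaW (ω i) (p i)|ℱ n]) x) ^ (1 / conjExp (p i))) ≠ ⊤
  hσpos : ∀ᵐ x ∂μ,
    0 < prodLim (fun i => ENNReal.ofReal (sigmaW (ω i) (p i) x) ^ (1 / p i))

/-!
Split `{τ < ∞}` into the dyadic level sets `B k = {2^k < ∏ᵢ E_τ(f i) ≤ 2^(k+1)}`. Each `B k`
lies in `F_τ`: on `{τ = n}` the stopped product is the `F_n`-measurable `∏ᵢ E_n(f i)`. Hence
`E_n(f i) ≤ E_n(f i χ_{B k})` on `B k ∩ {τ = n}`, so `𝔐(f⃗ χ_{B k}) > 2^k` on `B k`, and the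
weak-type inequality for `f⃗ χ_{B k}` gives `2^(k p₀) v(B k) ≤ (C ∏ᵢ ‖f i χ_{B k}‖)^p₀`.
Summing over `k`, Hölder's inequality for sums with exponents `p i / p₀` (valid for infinite
products through weighted AM-GM with a slack term) yields
`∑ₖ ∏ᵢ ‖f i χ_{B k}‖^p₀ ≤ ∏ᵢ ‖f i‖^p₀`. The level set `{∏ᵢ E_τ(f i) = ∞}` is `v`-null by the
weak-type inequality for `f⃗` itself.
-/

section InfiniteProducts

open Finset

theorem prodLim_mono {a b : ℕ → ℝ≥0∞} (h : ∀ i, a i ≤ b i) : prodLim a ≤ prodLim b :=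
  limsup_le_limsup (.of_forall fun _ => prod_le_prod' fun i _ => h i)

theorem HasProdLim.prodLim_eq {a : ℕ → ℝ≥0∞} {L : ℝ≥0∞} (h : HasProdLim a L) : prodLim a = L :=
  h.limsup_eq

theorem hasProdLim_zero_of_eq_zero {a : ℕ → ℝ≥0∞} {i : ℕ} (h : a i = 0) : HasProdLim a 0 :=
  tendsto_const_nhds.congr' <| (eventually_gt_atTop i).mono fun _ hk =>
    (prod_eq_zero (mem_range.2 hk) h).symm

theorem prodLim_eq_zero_of_eq_zero {a : ℕ → ℝ≥0∞} {i : ℕ} (h : a i = 0) : prodLim a = 0 :=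
  (hasProdLim_zero_of_eq_zero h).prodLim_eq

theorem Measurable.prodLim {α : Type*} {_ : MeasurableSpace α} {a : ℕ → α → ℝ≥0∞}
    (h : ∀ i, Measurable (a i)) : Measurable fun x => prodLim fun i => a i x :=
  .limsup fun _ => Finset.measurable_prod _ fun i _ => h i

theorem HasProdLim.mul {a b : ℕ → ℝ≥0∞} {A B : ℝ≥0∞} (ha : HasProdLim a A) (hb : HasProdLim b B)
    (h₁ : A ≠ 0 ∨ B ≠ ⊤) (h₂ : B ≠ 0 ∨ A ≠ ⊤) : HasProdLim (a * b) (A * B) := by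
  simpa only [HasProdLim, Pi.mul_apply, prod_mul_distrib] using ENNReal.Tendsto.mul ha h₁ hb h₂

theorem hasProdLim_iInf_of_le_one {a : ℕ → ℝ≥0∞} (h : ∀ i, a i ≤ 1) :
    HasProdLim a (⨅ N, ∏ i ∈ range N, a i) :=
  tendsto_atTop_iInf <| antitone_nat_of_succ_le fun N => by
    simpa [prod_range_succ] using mul_le_of_le_one_right' (h N)

theorem ENNReal.prod_rpow_le_sum_mul_add {ι : Type*} (s : Finset ι) {θ : ι → ℝ} {x : ι → ℝ≥0∞}
    (hθ : ∀ i ∈ s, 0 ≤ θ i) (hθs : ∑ i ∈ s, θ i ≤ 1) (hx : ∀ i ∈ s, x i ≠ ⊤) :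
    ∏ i ∈ s, x i ^ θ i
      ≤ ∑ i ∈ s, ENNReal.ofReal (θ i) * x i + ENNReal.ofReal (1 - ∑ i ∈ s, θ i) := by
  -- weighted AM-GM on `s` with one extra point `1` carrying the missing weight
  have hamgm := Real.geom_mean_le_arith_mean_weighted (insertNone s)
    (fun o => o.elim (1 - ∑ i ∈ s, θ i) θ) (fun o => o.elim 1 fun i => (x i).toReal)
    (forall_mem_insertNone.2 ⟨sub_nonneg.2 hθs, hθ⟩) (by simp [sum_insertNone])
    (forall_mem_insertNone.2 ⟨zero_le_one, fun _ _ => toReal_nonneg⟩)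
  simp only [prod_insertNone, sum_insertNone, Option.elim, Real.one_rpow, one_mul, mul_one]
    at hamgm
  calc ∏ i ∈ s, x i ^ θ i = ENNReal.ofReal (∏ i ∈ s, (x i).toReal ^ θ i) := by
        rw [ENNReal.ofReal_prod_of_nonneg fun i _ => by positivity]
        refine prod_congr rfl fun i hi => ?_
        rw [← ENNReal.ofReal_rpow_of_nonneg toReal_nonneg (hθ i hi), ofReal_toReal (hx i hi)]
    _ ≤ ENNReal.ofReal ((1 - ∑ i ∈ s, θ i) + ∑ i ∈ s, θ i * (x i).toReal) :=
        ENNReal.ofReal_le_ofReal hamgm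
    _ ≤ _ := by
        rw [add_comm]
        refine ENNReal.ofReal_add_le.trans (add_le_add_left ?_ _)
        rw [ENNReal.ofReal_sum_of_nonneg fun i hi => mul_nonneg (hθ i hi) toReal_nonneg]
        refine sum_le_sum fun i hi => ?_
        rw [ENNReal.ofReal_mul (hθ i hi), ofReal_toReal (hx i hi)]

theorem tsum_iInf_prod_rpow_le_one {κ : Type*} {c : κ → ℕ → ℝ≥0∞} {p : ℕ → ℝ} {p₀ : ℝ}
    (hp₀ : 0 < p₀) (hp : ∀ i, 0 < p i) (hθ : HasSum (fun i => p₀ / p i) 1)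
    (hc : ∀ i, ∑' k, c k i ^ p i ≤ 1) :
    ∑' k, (⨅ N, ∏ i ∈ range N, c k i) ^ p₀ ≤ 1 := by
  have hθ₀ : ∀ i, 0 ≤ p₀ / p i := fun i => (div_pos hp₀ (hp i)).le
  have hc_ne_top : ∀ k i, c k i ^ p i ≠ ⊤ := fun k i =>
    ne_top_of_le_ne_top ENNReal.one_ne_top ((ENNReal.le_tsum k).trans (hc i))
  have hk : ∀ k, (⨅ N, ∏ i ∈ range N, c k i) ^ p₀
      ≤ ∑' i, ENNReal.ofReal (p₀ / p i) * c k i ^ p i := by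
    intro k
    have hN : ∀ N, (⨅ N, ∏ i ∈ range N, c k i) ^ p₀ ≤ ∑ i ∈ range N,
        ENNReal.ofReal (p₀ / p i) * c k i ^ p i + ENNReal.ofReal (1 - ∑ i ∈ range N, p₀ / p i) :=
      fun N => calc
        _ ≤ (∏ i ∈ range N, c k i) ^ p₀ := ENNReal.rpow_le_rpow (iInf_le _ N) hp₀.le
        _ = ∏ i ∈ range N, (c k i ^ p i) ^ (p₀ / p i) := by
          rw [← ENNReal.prod_rpow_of_nonneg hp₀.le]
          refine prod_congr rfl fun i _ => ?_
          rw [← ENNReal.rpow_mul, mul_div_cancel₀ _ (hp i).ne']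
        _ ≤ _ := ENNReal.prod_rpow_le_sum_mul_add _ (fun i _ => hθ₀ i)
          (sum_le_hasSum _ (fun i _ => hθ₀ i) hθ) fun i _ => hc_ne_top k i
    have hlim := (ENNReal.tendsto_nat_tsum fun i => ENNReal.ofReal (p₀ / p i) * c k i ^ p i).add
      (ENNReal.tendsto_ofReal (hθ.tendsto_sum_nat.const_sub 1))
    simpa using ge_of_tendsto' hlim hN
  calc ∑' k, (⨅ N, ∏ i ∈ range N, c k i) ^ p₀
      ≤ ∑' k, ∑' i, ENNReal.ofReal (p₀ / p i) * c k i ^ p i := ENNReal.tsum_le_tsum hk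
    _ = ∑' i, ENNReal.ofReal (p₀ / p i) * ∑' k, c k i ^ p i := by
      rw [ENNReal.tsum_comm]
      simp_rw [ENNReal.tsum_mul_left]
    _ ≤ ∑' i, ENNReal.ofReal (p₀ / p i) :=
      ENNReal.tsum_le_tsum fun i => mul_le_of_le_one_right' (hc i)
    _ = 1 := by
      rw [← ENNReal.ofReal_tsum_of_nonneg hθ₀ hθ.summable, hθ.tsum_eq, ENNReal.ofReal_one]

theorem exists_hasProdLim_tsum_rpow_le {κ : Type*} {a : κ → ℕ → ℝ≥0∞} {b : ℕ → ℝ≥0∞}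
    {L : ℝ≥0∞} {p : ℕ → ℝ} {p₀ : ℝ} (hp₀ : 0 < p₀) (hp : ∀ i, 0 < p i)
    (hθ : HasSum (fun i => p₀ / p i) 1) (hab : ∀ i, ∑' k, a k i ^ p i ≤ b i ^ p i)
    (hb : ∀ i, b i ≠ ⊤) (hL : HasProdLim b L) (hL_ne_top : L ≠ ⊤) :
    ∃ L' : κ → ℝ≥0∞, (∀ k, HasProdLim (a k) (L' k)) ∧ ∑' k, L' k ^ p₀ ≤ L ^ p₀ := by
  by_cases hb₀ : ∃ i, b i = 0
  · obtain ⟨i, hi⟩ := hb₀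
    have ha : ∀ k, a k i = 0 := fun k => by
      have := (ENNReal.le_tsum k).trans (hab i)
      rwa [hi, ENNReal.zero_rpow_of_pos (hp i), nonpos_iff_eq_zero,
        ENNReal.rpow_eq_zero_iff_of_pos (hp i)] at this
    exact ⟨0, fun k => hasProdLim_zero_of_eq_zero (ha k), by simp [ENNReal.zero_rpow_of_pos hp₀]⟩
  push Not at hb₀
  set c : κ → ℕ → ℝ≥0∞ := fun k i => a k i / b i
  have hc : ∀ i, ∑' k, c k i ^ p i ≤ 1 := fun i => by
    simp_rw [c, ENNReal.div_rpow_of_nonneg _ _ (hp i).le, div_eq_mul_inv, ENNReal.tsum_mul_right,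
      ← div_eq_mul_inv]
    exact ENNReal.div_le_of_le_mul (by rw [one_mul]; exact hab i)
  have hc₁ : ∀ k i, c k i ≤ 1 := fun k i => by
    rw [← ENNReal.rpow_le_rpow_iff (hp i), ENNReal.one_rpow]
    exact (ENNReal.le_tsum k).trans (hc i)
  refine ⟨fun k => (⨅ N, ∏ i ∈ range N, c k i) * L, fun k => ?_, ?_⟩
  · have hr : (⨅ N, ∏ i ∈ range N, c k i) ≠ ⊤ :=
      ne_top_of_le_ne_top ENNReal.one_ne_top (iInf_le_of_le 0 (by simp))
    have hac : a k = c k * b := funext fun i => (ENNReal.div_mul_cancel (hb₀ i) (hb i)).symm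
    rw [hac]
    exact (hasProdLim_iInf_of_le_one (hc₁ k)).mul hL (.inr hL_ne_top) (.inr hr)
  · simp_rw [ENNReal.mul_rpow_of_nonneg _ _ hp₀.le, ENNReal.tsum_mul_right]
    exact mul_le_of_le_one_left' (tsum_iInf_prod_rpow_le_one hp₀ hp hθ hc)

end InfiniteProducts

section WeightedNorm

variable {m : MeasurableSpace Ω} {μ : Measure Ω}

theorem wNorm_rpow {f w : Ω → ℝ} {q : ℝ} (hq : q ≠ 0) :
    wNorm μ f q w ^ q = ∫⁻ x, ENNReal.ofReal (f x) ^ q * ENNReal.ofReal (w x) ∂μ := by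
  rw [wNorm, one_div, ENNReal.rpow_inv_rpow hq]

theorem tsum_wNorm_indicator_rpow_le {κ : Type*} [Countable κ] {B : κ → Set Ω}
    (hB : ∀ k, MeasurableSet (B k)) (hdisj : Pairwise (Function.onFun Disjoint B))
    {f w : Ω → ℝ} {q : ℝ} (hq : 0 < q) :
    ∑' k, wNorm μ ((B k).indicator f) q w ^ q ≤ wNorm μ f q w ^ q := by
  have hind : ∀ k, (fun x => ENNReal.ofReal ((B k).indicator f x) ^ q * ENNReal.ofReal (w x))
      = (B k).indicator fun x => ENNReal.ofReal (f x) ^ q * ENNReal.ofReal (w x) := fun k =>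
    funext fun x => by by_cases hx : x ∈ B k <;> simp [hx, ENNReal.zero_rpow_of_pos hq]
  simp_rw [wNorm_rpow hq.ne', hind, lintegral_indicator (hB _), ← lintegral_iUnion hB hdisj]
  exact setLIntegral_le_lintegral _ _

theorem Adm.exists_indicator {p : ℕ → ℝ} {p₀ : ℝ} {ω : ℕ → Ω → ℝ} {f : ℕ → Ω → ℝ} {Lf : ℝ≥0∞}
    (hf : Adm μ p ω f Lf) (hp₀ : 0 < p₀) (hp : ∀ i, 0 < p i) (hθ : HasSum (fun i => p₀ / p i) 1)
    {κ : Type*} [Countable κ] {B : κ → Set Ω} (hB : ∀ k, MeasurableSet (B k))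
    (hdisj : Pairwise (Function.onFun Disjoint B)) :
    ∃ L : κ → ℝ≥0∞, (∀ k, Adm μ p ω (fun i => (B k).indicator (f i)) (L k)) ∧
      ∑' k, L k ^ p₀ ≤ Lf ^ p₀ := by
  obtain ⟨hmf, hf₀, hfin, hLf, hprod⟩ := hf
  have hsum := fun i => tsum_wNorm_indicator_rpow_le (μ := μ) hB hdisj (f := f i) (w := ω i) (hp i)
  obtain ⟨L, hL, hLsum⟩ := exists_hasProdLim_tsum_rpow_le hp₀ hp hθ hsum hfin hprod hLf
  have hwNorm : ∀ k i, wNorm μ ((B k).indicator (f i)) (p i) (ω i) ≠ ⊤ := fun k i =>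
    ne_top_of_le_ne_top (hfin i) <|
      (ENNReal.rpow_le_rpow_iff (hp i)).1 ((ENNReal.le_tsum k).trans (hsum i))
  have hLk : ∀ k, L k ≠ ⊤ := fun k =>
    ne_top_of_le_ne_top hLf <| (ENNReal.rpow_le_rpow_iff hp₀).1 ((ENNReal.le_tsum k).trans hLsum)
  exact ⟨L, fun k => ⟨fun i => (hmf i).indicator (hB k),
    fun i => Set.indicator_nonneg fun x _ => hf₀ i x, hwNorm k, hLk k, hL k⟩, hLsum⟩

end WeightedNorm

section WeakType

variable {m : MeasurableSpace Ω} {μ : Measure Ω} {g : Ω → ℝ≥0∞} {q : ℝ} {v : Ω → ℝ}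

theorem mul_setLIntegral_rpow_le_wkNorm {c : ℝ≥0} {S : Set Ω} (hq : 0 < q)
    (hS : ∀ᵐ x ∂μ, x ∈ S → c < g x) :
    c * (∫⁻ x in S, ENNReal.ofReal (v x) ∂μ) ^ (1 / q) ≤ wkNorm μ g q v :=
  (mul_le_mul_right (ENNReal.rpow_le_rpow (lintegral_mono' (Measure.restrict_mono_ae hS) le_rfl)
    (one_div_pos.2 hq).le) _).trans <|
    le_iSup (fun c : ℝ≥0 => (c : ℝ≥0∞) *
      (∫⁻ x in {x | (c : ℝ≥0∞) < g x}, ENNReal.ofReal (v x) ∂μ) ^ (1 / q)) c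

theorem rpow_mul_setLIntegral_le_of_wkNorm_le {c K : ℝ≥0∞} {S : Set Ω} (hq : 0 < q) (hc : c ≠ ⊤)
    (hK : wkNorm μ g q v ≤ K) (hS : ∀ᵐ x ∂μ, x ∈ S → c < g x) :
    c ^ q * ∫⁻ x in S, ENNReal.ofReal (v x) ∂μ ≤ K ^ q := by
  lift c to ℝ≥0 using hc
  calc (c : ℝ≥0∞) ^ q * ∫⁻ x in S, ENNReal.ofReal (v x) ∂μ
      = (c * (∫⁻ x in S, ENNReal.ofReal (v x) ∂μ) ^ (1 / q)) ^ q := by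
        rw [ENNReal.mul_rpow_of_nonneg _ _ hq.le, one_div, ENNReal.rpow_inv_rpow hq.ne']
    _ ≤ K ^ q := ENNReal.rpow_le_rpow ((mul_setLIntegral_rpow_le_wkNorm hq hS).trans hK) hq.le

theorem setLIntegral_eq_top_eq_zero_of_wkNorm_ne_top (hq : 0 < q) (hg : wkNorm μ g q v ≠ ⊤) :
    ∫⁻ x in {x | g x = ⊤}, ENNReal.ofReal (v x) ∂μ = 0 := by
  have hn : ∀ n : ℕ, (n : ℝ≥0∞) * (∫⁻ x in {x | g x = ⊤}, ENNReal.ofReal (v x) ∂μ) ^ (1 / q)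
      ≤ wkNorm μ g q v := fun n => by
    have := mul_setLIntegral_rpow_le_wkNorm (μ := μ) (v := v) (c := n) (S := {x | g x = ⊤}) hq
      (.of_forall fun x (hx : g x = ⊤) => hx ▸ ENNReal.coe_lt_top)
    rwa [ENNReal.coe_natCast] at this
  have htop := iSup_le hn
  rw [← ENNReal.iSup_mul, ENNReal.iSup_natCast] at htop
  by_contra hne
  have hpos : (∫⁻ x in {x | g x = ⊤}, ENNReal.ofReal (v x) ∂μ) ^ (1 / q) ≠ 0 :=
    fun h => hne ((ENNReal.rpow_eq_zero_iff_of_pos (one_div_pos.2 hq)).1 h)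
  exact hg (top_le_iff.1 ((ENNReal.top_mul hpos).symm.le.trans htop))

end WeakType

theorem lintegral_rpow_le_tsum_zpow {α : Type*} {_ : MeasurableSpace α} {ν : Measure α}
    {G : α → ℝ≥0∞} (hG : Measurable G) {p : ℝ} (hp : 0 < p) (htop : ν {x | G x = ⊤} = 0) :
    ∫⁻ x, G x ^ p ∂ν
      ≤ ∑' k : ℤ, ((2 : ℝ≥0∞) ^ (k + 1)) ^ p * ν (G ⁻¹' Set.Ioc (2 ^ k) (2 ^ (k + 1))) := by
  have hshell : ∀ k : ℤ, MeasurableSet (G ⁻¹' Set.Ioc ((2 : ℝ≥0∞) ^ k) (2 ^ (k + 1))) :=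
    fun k => hG measurableSet_Ioc
  calc ∫⁻ x, G x ^ p ∂ν
      ≤ ∫⁻ x, ∑' k : ℤ, (G ⁻¹' Set.Ioc (2 ^ k) (2 ^ (k + 1))).indicator
          (fun _ => ((2 : ℝ≥0∞) ^ (k + 1)) ^ p) x ∂ν := by
        refine lintegral_mono_ae ?_
        filter_upwards [measure_eq_zero_iff_ae_notMem.1 htop] with x hx
        rcases eq_or_ne (G x) 0 with h0 | h0
        · simp [h0, ENNReal.zero_rpow_of_pos hp]
        obtain ⟨k, hk⟩ := ENNReal.exists_mem_Ioc_zpow h0 hx ENNReal.one_lt_two ENNReal.ofNat_ne_top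
        refine le_trans ?_ (ENNReal.le_tsum k)
        rw [Set.indicator_of_mem (Set.mem_preimage.2 hk)]
        exact ENNReal.rpow_le_rpow hk.2 hp.le
    _ = _ := by
        rw [lintegral_tsum fun k => (measurable_const.indicator (hshell k)).aemeasurable]
        simp_rw [lintegral_indicator_const (hshell _)]

theorem pairwise_disjoint_preimage_Ioc_zpow_inter {α : Type*} (G : α → ℝ≥0∞) (T : Set α) :
    Pairwise (Function.onFun Disjoint fun k : ℤ => G ⁻¹' Set.Ioc (2 ^ k) (2 ^ (k + 1)) ∩ T) :=
  fun _ _ hjk => ((Monotone.pairwise_disjoint_on_Ioc_succ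
    (fun _ _ => ENNReal.zpow_le_of_le one_le_two) hjk).preimage G).mono
      Set.inter_subset_left Set.inter_subset_left

section StoppingTime

variable {m0 : MeasurableSpace Ω} {ℱ : Filtration ℕ m0} {τ : Ω → ℕ∞}

theorem IsStopT.measurableSet_eq (hτ : IsStopT ℱ τ) (n : ℕ) :
    MeasurableSet[ℱ n] {x | τ x = n} :=
  IsStoppingTime.measurableSet_eq hτ n

theorem IsStopT.measurable (hτ : IsStopT ℱ τ) : Measurable τ :=
  ENat.measurable_iff.2 fun n => ℱ.le n _ (hτ.measurableSet_eq n)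

theorem IsStopT.measurableSet_ne_top (hτ : IsStopT ℱ τ) : MeasurableSet {x | τ x ≠ ⊤} :=
  hτ.measurable (measurableSet_singleton ⊤).compl

theorem IsStopT.measurable_stopped {β : Type*} [MeasurableSpace β] (hτ : IsStopT ℱ τ)
    {u : ℕ → Ω → β} (hu : ∀ n, Measurable (u n)) : Measurable fun x => u (τ x).toNat x :=
  (measurable_from_prod_countable_left (f := fun q : Ω × ℕ => u q.2 q.1) hu).comp
    (measurable_id.prodMk ((Measurable.of_discrete (f := ENat.toNat)).comp hτ.measurable))

theorem IsStopT.measurableSet_stopped_preimage_inter {β : Type*} [MeasurableSpace β]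
    (hτ : IsStopT ℱ τ) {u : ℕ → Ω → β} (hu : ∀ n, Measurable[ℱ n] (u n)) {I : Set β}
    (hI : MeasurableSet I) (n : ℕ) :
    MeasurableSet[ℱ n] ((fun x => u (τ x).toNat x) ⁻¹' I ∩ {x | τ x ≠ ⊤} ∩ {x | τ x = n}) := by
  convert (hu n hI).inter (hτ.measurableSet_eq n) using 1
  ext x
  by_cases hn : τ x = n <;> simp [hn]

end StoppingTime

def prodCondExp {m0 : MeasurableSpace Ω} (μ : Measure Ω) (ℱ : Filtration ℕ m0)
    (f : ℕ → Ω → ℝ) (n : ℕ) (x : Ω) : ℝ≥0∞ :=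
  prodLim fun i => ENNReal.ofReal ((μ[f i|ℱ n]) x)

section Localization

variable {m0 : MeasurableSpace Ω} {μ : Measure Ω} {ℱ : Filtration ℕ m0} {f : ℕ → Ω → ℝ}

theorem measurable_prodCondExp (n : ℕ) : Measurable[ℱ n] (prodCondExp μ ℱ f n) :=
  Measurable.prodLim fun _ => ENNReal.measurable_ofReal.comp stronglyMeasurable_condExp.measurable

theorem prodCondExp_le_doobM (n : ℕ) (x : Ω) : prodCondExp μ ℱ f n x ≤ doobM μ ℱ f x :=
  le_iSup (fun n => prodCondExp μ ℱ f n x) n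

theorem prodCondExp_eq_zero_of_not_integrable {i : ℕ} (hi : ¬Integrable (f i) μ) (n : ℕ)
    (x : Ω) : prodCondExp μ ℱ f n x = 0 :=
  prodLim_eq_zero_of_eq_zero (i := i) (by simp [condExp_of_not_integrable hi])

theorem ae_condExp_le_condExp_indicator {m : MeasurableSpace Ω} {g : Ω → ℝ} {S B : Set Ω}
    (hm : m ≤ m0) (hg : Integrable g μ) (hg₀ : 0 ≤ g) (hS : MeasurableSet[m] S)
    (hB : MeasurableSet[m0] B) (hSB : S ⊆ B) :
    ∀ᵐ x ∂μ, x ∈ S → (μ[g|m]) x ≤ (μ[B.indicator g|m]) x := by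
  filter_upwards [condExp_indicator hg hS, condExp_mono (m := m) (hg.indicator (hm _ hS))
    (hg.indicator hB) (.of_forall (Set.indicator_le_indicator_of_subset hSB hg₀))]
    with x h₁ h₂ hx
  rw [← Set.indicator_of_mem hx (μ[g|m]), ← h₁]
  exact h₂

theorem ae_prodCondExp_le_doobM_indicator (hf : ∀ i, Integrable (f i) μ) (hf₀ : ∀ i, 0 ≤ f i)
    {n : ℕ} {S B : Set Ω} (hS : MeasurableSet[ℱ n] S) (hB : MeasurableSet B) (hSB : S ⊆ B) :
    ∀ᵐ x ∂μ, x ∈ S → prodCondExp μ ℱ f n x ≤ doobM μ ℱ (fun i => B.indicator (f i)) x := by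
  filter_upwards [ae_all_iff.2 fun i =>
    ae_condExp_le_condExp_indicator (ℱ.le n) (hf i) (hf₀ i) hS hB hSB] with x hx hxS
  exact (prodLim_mono fun i => ENNReal.ofReal_le_ofReal (hx i hxS)).trans
    (prodCondExp_le_doobM n x)

theorem ae_stopped_prodCondExp_le_doobM_indicator {τ : Ω → ℕ∞}
    (hf : ∀ i, Integrable (f i) μ) (hf₀ : ∀ i, 0 ≤ f i) {B : Set Ω} (hB : MeasurableSet B)
    (hBτ : ∀ n : ℕ, MeasurableSet[ℱ n] (B ∩ {x | τ x = n})) (hBT : B ⊆ {x | τ x ≠ ⊤}) :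
    ∀ᵐ x ∂μ, x ∈ B →
      prodCondExp μ ℱ f (τ x).toNat x ≤ doobM μ ℱ (fun i => B.indicator (f i)) x := by
  filter_upwards [ae_all_iff.2 fun n =>
    ae_prodCondExp_le_doobM_indicator hf hf₀ (hBτ n) hB Set.inter_subset_left] with x hx hxB
  exact hx _ ⟨hxB, (ENat.natCast_toNat (hBT hxB)).symm⟩

end Localization

section Testing

variable {m0 : MeasurableSpace Ω} {μ : Measure Ω} {ℱ : Filtration ℕ m0} {p : ℕ → ℝ} {p₀ : ℝ}
  {v : Ω → ℝ} {ω : ℕ → Ω → ℝ} {C : ℝ≥0∞} {τ : Ω → ℕ∞} {f : ℕ → Ω → ℝ}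

theorem IsStopT.measurable_stopped_prodCondExp (hτ : IsStopT ℱ τ) :
    Measurable fun x => prodCondExp μ ℱ f (τ x).toNat x :=
  hτ.measurable_stopped fun n => (measurable_prodCondExp n).mono (ℱ.le n) le_rfl

theorem setLIntegral_stopped_prodCondExp_eq_top_eq_zero (hp₀ : 0 < p₀) (hC : C ≠ ⊤)
    (hweak : WeakIneq μ ℱ p p₀ v ω C) {Lf : ℝ≥0∞} (hf : Adm μ p ω f Lf) :
    ∫⁻ x in {x | prodCondExp μ ℱ f (τ x).toNat x = ⊤}, ENNReal.ofReal (v x) ∂μ = 0 :=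
  le_zero_iff.1 <| (lintegral_mono_set fun x (hx : _ = ⊤) =>
    top_le_iff.1 (hx ▸ prodCondExp_le_doobM _ x)).trans_eq <|
    setLIntegral_eq_top_eq_zero_of_wkNorm_ne_top hp₀
      ((hweak f Lf hf).trans_lt (ENNReal.mul_lt_top hC.lt_top hf.2.2.2.1.lt_top)).ne

theorem rpow_mul_setLIntegral_stopped_prodCondExp_preimage_le (hp₀ : 0 < p₀)
    (hweak : WeakIneq μ ℱ p p₀ v ω C) (hτ : IsStopT ℱ τ) (hf : ∀ i, Integrable (f i) μ)
    (hf₀ : ∀ i, 0 ≤ f i) {I : Set ℝ≥0∞} (hI : MeasurableSet I) {c : ℝ≥0∞} (hc : c ≠ ⊤)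
    (hcI : ∀ y ∈ I, c < y) {L : ℝ≥0∞}
    (hL : Adm μ p ω (fun i => ((fun x => prodCondExp μ ℱ f (τ x).toNat x) ⁻¹' I ∩
      {x | τ x ≠ ⊤}).indicator (f i)) L) :
    c ^ p₀ * ∫⁻ x in (fun x => prodCondExp μ ℱ f (τ x).toNat x) ⁻¹' I ∩ {x | τ x ≠ ⊤},
      ENNReal.ofReal (v x) ∂μ ≤ (C * L) ^ p₀ := by
  refine rpow_mul_setLIntegral_le_of_wkNorm_le hp₀ hc (hweak _ _ hL) ?_
  filter_upwards [ae_stopped_prodCondExp_le_doobM_indicator hf hf₀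
    ((hτ.measurable_stopped_prodCondExp hI).inter hτ.measurableSet_ne_top)
    (hτ.measurableSet_stopped_preimage_inter (fun n => measurable_prodCondExp n) hI)
    Set.inter_subset_right] with x hx hxB
  exact (hcI _ hxB.1).trans_le (hx hxB)

theorem setLIntegral_stopped_prodCondExp_rpow_le (hp₀ : 0 < p₀) (hp : ∀ i, 0 < p i)
    (hθ : HasSum (fun i => p₀ / p i) 1) (hv : Measurable v) (hC : C ≠ ⊤)
    (hweak : WeakIneq μ ℱ p p₀ v ω C) (hτ : IsStopT ℱ τ) {Lf : ℝ≥0∞} (hf : Adm μ p ω f Lf)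
    (hfi : ∀ i, Integrable (f i) μ) :
    ∫⁻ x in {x | τ x ≠ ⊤}, prodCondExp μ ℱ f (τ x).toNat x ^ p₀ * ENNReal.ofReal (v x) ∂μ
      ≤ (2 * C * Lf) ^ p₀ := by
  set G : Ω → ℝ≥0∞ := fun x => prodCondExp μ ℱ f (τ x).toNat x
  set T := {x | τ x ≠ ⊤}
  have hG : Measurable G := hτ.measurable_stopped_prodCondExp
  have hT : MeasurableSet T := hτ.measurableSet_ne_top
  obtain ⟨L, hL, hLsum⟩ := hf.exists_indicator hp₀ hp hθ
    (fun k => (hG measurableSet_Ioc).inter hT) (pairwise_disjoint_preimage_Ioc_zpow_inter G T)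
  set ν := (μ.withDensity fun x => ENNReal.ofReal (v x)).restrict T with hν_def
  have hν : ∀ S, MeasurableSet S → ν S = ∫⁻ x in S ∩ T, ENNReal.ofReal (v x) ∂μ := fun S hS => by
    rw [Measure.restrict_apply hS, withDensity_apply _ (hS.inter hT)]
  have htop : ν {x | G x = ⊤} = 0 := by
    rw [hν _ (show MeasurableSet {x | G x = ⊤} from hG (measurableSet_singleton ⊤))]
    exact le_zero_iff.1 ((lintegral_mono_set Set.inter_subset_left).trans_eq
      (setLIntegral_stopped_prodCondExp_eq_top_eq_zero hp₀ hC hweak hf))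
  have hshell : ∀ k : ℤ, ((2 : ℝ≥0∞) ^ k) ^ p₀ * ν (G ⁻¹' Set.Ioc (2 ^ k) (2 ^ (k + 1)))
      ≤ (C * L k) ^ p₀ := fun k => by
    rw [hν _ (hG measurableSet_Ioc)]
    exact rpow_mul_setLIntegral_stopped_prodCondExp_preimage_le hp₀ hweak hτ hfi hf.2.1
      measurableSet_Ioc (ENNReal.zpow_ne_top two_ne_zero ENNReal.ofNat_ne_top k)
      (fun _ hy => hy.1) (hL k)
  calc ∫⁻ x in T, G x ^ p₀ * ENNReal.ofReal (v x) ∂μ = ∫⁻ x, G x ^ p₀ ∂ν := by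
        rw [hν_def, setLIntegral_withDensity_eq_setLIntegral_mul _ hv.ennreal_ofReal
          (hG.pow_const _) hT]
        simp_rw [Pi.mul_apply, mul_comm]
    _ ≤ ∑' k : ℤ, ((2 : ℝ≥0∞) ^ (k + 1)) ^ p₀ * ν (G ⁻¹' Set.Ioc (2 ^ k) (2 ^ (k + 1))) :=
        lintegral_rpow_le_tsum_zpow hG hp₀ htop
    _ = 2 ^ p₀ * ∑' k : ℤ, ((2 : ℝ≥0∞) ^ k) ^ p₀ * ν (G ⁻¹' Set.Ioc (2 ^ k) (2 ^ (k + 1))) := by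
        rw [← ENNReal.tsum_mul_left]
        simp_rw [ENNReal.zpow_add two_ne_zero ENNReal.ofNat_ne_top, zpow_one,
          ENNReal.mul_rpow_of_nonneg _ _ hp₀.le, mul_comm _ ((2 : ℝ≥0∞) ^ p₀), mul_assoc]
    _ ≤ 2 ^ p₀ * ∑' k, (C * L k) ^ p₀ := by gcongr with k; exact hshell k
    _ = (2 * C) ^ p₀ * ∑' k, L k ^ p₀ := by
        simp_rw [ENNReal.mul_rpow_of_nonneg _ _ hp₀.le, ENNReal.tsum_mul_left, mul_assoc]
    _ ≤ (2 * C) ^ p₀ * Lf ^ p₀ := by gcongr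
    _ = (2 * C * Lf) ^ p₀ := (ENNReal.mul_rpow_of_nonneg _ _ hp₀.le).symm

end Testing

theorem testIneq_of_weakIneq_general
    {m0 : MeasurableSpace Ω} (μ : Measure Ω)
    (ℱ : Filtration ℕ m0) (p : ℕ → ℝ) (p₀ : ℝ) (v : Ω → ℝ) (ω : ℕ → Ω → ℝ)
    (hS : Standing μ ℱ p p₀ v ω)
    (h : ∃ C : ℝ≥0∞, C ≠ ⊤ ∧ WeakIneq μ ℱ p p₀ v ω C) :
    ∃ C' : ℝ≥0∞, C' ≠ ⊤ ∧ TestIneq μ ℱ p p₀ v ω C' := by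
  obtain ⟨C, hC, hweak⟩ := h
  have hp : ∀ i, 0 < p i := fun i => one_pos.trans (hS.hp i)
  have hθ : HasSum (fun i => p₀ / p i) 1 := by
    simpa only [mul_one_div, div_self hS.hp₀.ne'] using hS.hps.mul_left p₀
  refine ⟨2 * C, ENNReal.mul_ne_top ENNReal.ofNat_ne_top hC, fun τ hτ f Lf hf => ?_⟩
  change (∫⁻ x in {x | τ x ≠ ⊤}, prodCondExp μ ℱ f (τ x).toNat x ^ p₀ *
    ENNReal.ofReal (v x) ∂μ) ^ (1 / p₀) ≤ 2 * C * Lf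
  rw [one_div, ENNReal.rpow_inv_le_iff hS.hp₀]
  by_cases hfi : ∀ i, Integrable (f i) μ
  · exact setLIntegral_stopped_prodCondExp_rpow_le hS.hp₀ hp hθ hS.hv hC hweak hτ hf hfi
  · -- `μ[f i|ℱ n] = 0` for non-integrable `f i`, so the stopped product vanishes
    obtain ⟨i, hi⟩ := not_forall.1 hfi
    simp [prodCondExp_eq_zero_of_not_integrable hi, ENNReal.zero_rpow_of_pos hS.hp₀]

/-- If the weak-type inequality holds (for some finite constant), then the testing
inequality over stopping times holds for all admissible f⃗. -/
theorem testIneq_of_weakIneq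
    {m0 : MeasurableSpace Ω} (μ : Measure Ω) [IsProbabilityMeasure μ] (hc : μ.IsComplete)
    (ℱ : Filtration ℕ m0) (p : ℕ → ℝ) (p₀ : ℝ) (v : Ω → ℝ) (ω : ℕ → Ω → ℝ)
    (hS : Standing μ ℱ p p₀ v ω)
    (h : ∃ C : ℝ≥0∞, C ≠ ⊤ ∧ WeakIneq μ ℱ p p₀ v ω C) :
    ∃ C' : ℝ≥0∞, C' ≠ ⊤ ∧ TestIneq μ ℱ p p₀ v ω C' :=
  testIneq_of_weakIneq_general μ ℱ p p₀ v ω hS h
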